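/- Define the sequences X* and Q* as follows. For each integer ℓ ≥ 2 let n_ℓ := ℓ·⌈(ln ℓ)²⌉+1, θ_ℓ := π/(2(n_ℓ−1)), and for 0 ≤ j ≤ n_ℓ−1 let x_{ℓ,j} := (cos(jθ_ℓ), sin(jθ_ℓ)) if ℓ is even, x_{ℓ,j} := (sin(jθ_ℓ), cos(jθ_ℓ)) if ℓ is odd. Let α := ∑_{m=2}^∞ 1/(m (ln m)²), δ_ℓ := 1/(α ℓ (ln ℓ)²), z_ℓ := ∑_{m=2}^ℓ δ_m, z_{ℓ,j} := 1 − δ_ℓ·cot((j+1)θ_ℓ) for 0 ≤ j ≤ n_ℓ−2 and z_{ℓ,n_ℓ−1} := 1. For even ℓ set q_{ℓ,j} := (z_ℓ, z_{ℓ,j}); for odd ℓ set q_{ℓ,j} := the vector among q_0 := (0,0) and {q_{ℓ',j'} : ℓ' < ℓ} maximizing x_{ℓ,j}·q_{ℓ',j'}. Define gap_{ℓ,j} := x_{ℓ,j}·q_{ℓ,j} − max over q ∈ {q_0} ∪ {q_{ℓ',j'} : (ℓ',j') lexicographically before (ℓ,j)} of x_{ℓ,j}·q. Then for every even ℓ ≥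 2 and every 0 ≤ j ≤ n_ℓ−1, gap_{ℓ,j} = x_{ℓ,j}·q_{ℓ,j} − max{ x_{ℓ,j}·q_{ℓ−2,n_{ℓ−2}−1}, x_{ℓ,j}·q_{ℓ,j−1} }, where by convention q_{0,j'} := (0,0) and q_{ℓ,−1} := (0,0). -/

import Mathlib

open scoped BigOperators ENNReal NNReal

noncomputable section

namespace Stmt13

/-- Valuation / allocation vectors over 2 items. -/
abbrev V2 := Fin 2 → ℝ

/-- Dot product. -/
def dot (x y : V2) : ℝ := ∑ t, x t * y t

/-- ℓ¹ norm. -/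
def norm1 (x : V2) : ℝ := ∑ t, |x t|

/-- `n_ℓ := ℓ·⌈(ln ℓ)²⌉ + 1`. -/
def nl (l : ℕ) : ℕ := l * ⌈(Real.log l) ^ 2⌉₊ + 1

/-- `θ_ℓ := π / (2(n_ℓ − 1))`. -/
def θ (l : ℕ) : ℝ := Real.pi / (2 * ((nl l : ℝ) - 1))

/-- `α := ∑_{m=2}^∞ 1/(m (ln m)²)`. -/
def α : ℝ := ∑' m : ℕ, if 2 ≤ m then 1 / (m * (Real.log m) ^ 2) else 0

/-- `δ_ℓ := 1/(α ℓ (ln ℓ)²)`. -/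
def δ (l : ℕ) : ℝ := 1 / (α * l * (Real.log l) ^ 2)

/-- `cot x := cos x / sin x`. -/
def cot (x : ℝ) : ℝ := Real.cos x / Real.sin x

/-- `z_ℓ := ∑_{m=2}^ℓ δ_m`. -/
def zl (l : ℕ) : ℝ := ∑ m ∈ Finset.Icc 2 l, δ m

/-- `z_{ℓ,j} := 1 − δ_ℓ·cot((j+1)θ_ℓ)` for `j ≤ n_ℓ − 2`, and `z_{ℓ,n_ℓ−1} := 1`. -/
def zlj (l j : ℕ) : ℝ :=
  if j = nl l - 1 then 1 else 1 - δ l * cot (((j : ℝ) + 1) * θ l)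

/-- The point `x_{ℓ,j}` of the layered construction. -/
def xstar (p : ℕ × ℕ) : V2 :=
  if Even p.1 then ![Real.cos (p.2 * θ p.1), Real.sin (p.2 * θ p.1)]
  else ![Real.sin (p.2 * θ p.1), Real.cos (p.2 * θ p.1)]

/-- Valid (layer, position) indices: `ℓ ≥ 2`, `0 ≤ j ≤ n_ℓ − 1`. -/
def validIdx (p : ℕ × ℕ) : Prop := 2 ≤ p.1 ∧ p.2 < nl p.1

/-- Lexicographic order on indices: `(ℓ',j')` comes before `(ℓ,j)`. -/
def lexBefore (p q : ℕ × ℕ) : Prop := p.1 < q.1 ∨ (p.1 = q.1 ∧ p.2 < q.2)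

/-- `Q` is the allocation sequence `Q*`: on even layers `q_{ℓ,j} = (z_ℓ, z_{ℓ,j})`;
on odd layers `q_{ℓ,j}` is a vector among `q_0 = (0,0)` and `{q_{ℓ',j'} : ℓ' < ℓ}`
maximizing `x_{ℓ,j}·q`. -/
def isQstar (Q : ℕ × ℕ → V2) : Prop :=
  (∀ p : ℕ × ℕ, validIdx p → Even p.1 → Q p = ![zl p.1, zlj p.1 p.2]) ∧
  (∀ p : ℕ × ℕ, validIdx p → ¬ Even p.1 →
    (Q p = 0 ∨ ∃ p', validIdx p' ∧ p'.1 < p.1 ∧ Q p = Q p') ∧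
    (∀ p', validIdx p' → p'.1 < p.1 → dot (xstar p) (Q p') ≤ dot (xstar p) (Q p)) ∧
    0 ≤ dot (xstar p) (Q p))

/-- `gap_{ℓ,j} := x_{ℓ,j}·q_{ℓ,j} − max_{q} x_{ℓ,j}·q`, the maximum over `q_0 = (0,0)`
and all `q_{ℓ',j'}` with `(ℓ',j')` lexicographically before `(ℓ,j)`. -/
def gapStar (Q : ℕ × ℕ → V2) (p : ℕ × ℕ) : ℝ :=
  dot (xstar p) (Q p) -
    sSup (insert (0 : ℝ)
      {y | ∃ p', validIdx p' ∧ lexBefore p' p ∧ y = dot (xstar p) (Q p')})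

/-! On an even layer both coordinates of `x_{ℓ,j}` are nonnegative, so `q ↦ x_{ℓ,j}·q` is
monotone for the componentwise order. Every vector of an earlier layer is dominated
componentwise by `q_{ℓ-2,n_{ℓ-2}-1} = (z_{ℓ-2}, 1)`: on even layers because `z_ℓ` increases in `ℓ`
and `z_{ℓ,j} ≤ 1`, on odd layers because `q_{ℓ,j}` is `0` or a copy of a vector of a still earlier
layer. Earlier vectors of layer `ℓ` are dominated by `q_{ℓ,j-1}`, since `cot` decreases on
`(0, π/2]`. Both dominating vectors are themselves candidates, so they realise the maximum. -/

lemma vec2_le_vec2 {M : Type*} [Preorder M] {a b c d : M} (hac : a ≤ c) (hbd : b ≤ d) :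
    ![a, b] ≤ ![c, d] := by
  rw [Pi.le_def, Fin.forall_fin_two]
  exact ⟨hac, hbd⟩

lemma vec2_nonneg {M : Type*} [Preorder M] [Zero M] {a b : M} (ha : 0 ≤ a) (hb : 0 ≤ b) :
    0 ≤ ![a, b] := by
  rw [Pi.le_def, Fin.forall_fin_two]
  exact ⟨ha, hb⟩

lemma cot_le_cot {a b : ℝ} (ha : 0 < a) (hab : a ≤ b) (hb : b ≤ Real.pi / 2) :
    cot b ≤ cot a := by
  have hsa : 0 < Real.sin a := Real.sin_pos_of_pos_of_lt_pi ha (by linarith [Real.pi_pos])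
  have hca : 0 ≤ Real.cos a := Real.cos_nonneg_of_mem_Icc ⟨by linarith, by linarith⟩
  have hcos : Real.cos b ≤ Real.cos a :=
    Real.cos_le_cos_of_nonneg_of_le_pi ha.le (by linarith [Real.pi_pos]) hab
  have hsin : Real.sin a ≤ Real.sin b :=
    Real.sin_le_sin_of_le_of_le_pi_div_two (by linarith) hb hab
  exact div_le_div₀ hca hcos hsa hsin

lemma cot_nonneg {a : ℝ} (ha : 0 < a) (ha' : a ≤ Real.pi / 2) : 0 ≤ cot a := by
  simpa [cot] using cot_le_cot ha ha' le_rfl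

lemma two_le_nl {l : ℕ} (hl : 2 ≤ l) : 2 ≤ nl l := by
  have hlog : 0 < Real.log l := Real.log_pos (by exact_mod_cast hl)
  have hceil : 1 ≤ ⌈(Real.log l) ^ 2⌉₊ := Nat.one_le_ceil_iff.mpr (by positivity)
  have := Nat.mul_le_mul hl hceil
  rw [nl]
  omega

lemma θ_pos {l : ℕ} (hl : 2 ≤ l) : 0 < θ l := by
  have : (2 : ℝ) ≤ nl l := by exact_mod_cast two_le_nl hl
  exact div_pos Real.pi_pos (by linarith)

lemma natCast_mul_θ_le_pi_div_two {l j : ℕ} (hl : 2 ≤ l) (hj : j < nl l) :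
    (j : ℝ) * θ l ≤ Real.pi / 2 := by
  have hn : (2 : ℝ) ≤ nl l := by exact_mod_cast two_le_nl hl
  have hj' : (j : ℝ) + 1 ≤ nl l := by exact_mod_cast hj
  calc (j : ℝ) * θ l ≤ ((nl l : ℝ) - 1) * θ l :=
        mul_le_mul_of_nonneg_right (by linarith) (θ_pos hl).le
    _ = Real.pi / 2 := by
        have : (nl l : ℝ) - 1 ≠ 0 := by linarith
        rw [θ]
        field_simp

lemma succ_mul_θ_mem {l j : ℕ} (hl : 2 ≤ l) (hj : j + 1 < nl l) :
    0 < ((j : ℝ) + 1) * θ l ∧ ((j : ℝ) + 1) * θ l ≤ Real.pi / 2 := by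
  refine ⟨mul_pos (by positivity) (θ_pos hl), ?_⟩
  exact_mod_cast natCast_mul_θ_le_pi_div_two hl hj

lemma δ_nonneg (l : ℕ) : 0 ≤ δ l := by
  have : 0 ≤ α := tsum_nonneg fun m => by positivity
  rw [δ]
  positivity

lemma zl_nonneg (l : ℕ) : 0 ≤ zl l :=
  Finset.sum_nonneg fun m _ => δ_nonneg m

lemma zl_mono : Monotone zl := fun _ _ h =>
  Finset.sum_le_sum_of_subset_of_nonneg (Finset.Icc_subset_Icc_right h)
    fun m _ _ => δ_nonneg m

lemma zlj_le_one {l j : ℕ} (hl : 2 ≤ l) (hj : j < nl l) : zlj l j ≤ 1 := by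
  rw [zlj]
  split_ifs with hlast
  · exact le_rfl
  · obtain ⟨hpos, hle⟩ := succ_mul_θ_mem hl (show j + 1 < nl l by omega)
    nlinarith [δ_nonneg l, cot_nonneg hpos hle]

lemma zlj_mono {l j j' : ℕ} (hl : 2 ≤ l) (hjj' : j ≤ j') (hj' : j' + 1 < nl l) :
    zlj l j ≤ zlj l j' := by
  rw [zlj, if_neg (by omega), zlj, if_neg (by omega)]
  obtain ⟨hpos, -⟩ := succ_mul_θ_mem hl (show j + 1 < nl l by omega)
  obtain ⟨-, hle⟩ := succ_mul_θ_mem hl hj'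
  have hjj'' : (j : ℝ) + 1 ≤ j' + 1 := by exact_mod_cast Nat.succ_le_succ hjj'
  have hcot := cot_le_cot hpos (mul_le_mul_of_nonneg_right hjj'' (θ_pos hl).le) hle
  nlinarith [δ_nonneg l]

lemma xstar_nonneg {l j : ℕ} (hl : 2 ≤ l) (hleven : Even l) (hj : j < nl l) :
    0 ≤ xstar (l, j) := by
  have h0 : 0 ≤ (j : ℝ) * θ l := mul_nonneg (Nat.cast_nonneg j) (θ_pos hl).le
  have h1 := natCast_mul_θ_le_pi_div_two hl hj
  rw [xstar, if_pos hleven]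
  exact vec2_nonneg (Real.cos_nonneg_of_mem_Icc ⟨by linarith [Real.pi_pos], h1⟩)
    (Real.sin_nonneg_of_nonneg_of_le_pi h0 (by linarith [Real.pi_pos]))

lemma isQstar.apply_last {Q : ℕ × ℕ → V2} (hQ : isQstar Q) {l : ℕ} (hl : 2 ≤ l)
    (hleven : Even l) : Q (l, nl l - 1) = ![zl l, 1] := by
  have hlast : nl l - 1 < nl l := by have := two_le_nl hl; omega
  rw [hQ.1 (l, nl l - 1) ⟨hl, hlast⟩ hleven, zlj, if_pos rfl]

lemma isQstar.le_of_fst_lt {Q : ℕ × ℕ → V2} (hQ : isQstar Q) {l : ℕ} (hleven : Even l) :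
    ∀ p, validIdx p → p.1 < l → Q p ≤ ![zl (l - 2), 1] := by
  intro p
  induction h : p.1 using Nat.strong_induction_on generalizing p with
  | _ n ih =>
    intro hp hlt
    by_cases hpe : Even p.1
    · rw [hQ.1 p hp hpe]
      have : p.1 ≤ l - 2 := by
        obtain ⟨a, ha⟩ := hpe; obtain ⟨b, hb⟩ := hleven; omega
      exact vec2_le_vec2 (zl_mono this) (zlj_le_one hp.1 hp.2)
    · rcases (hQ.2 p hp hpe).1 with hzero | ⟨p', hp', hlt', hcopy⟩
      · rw [hzero]
        exact vec2_nonneg (zl_nonneg _) zero_le_one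
      · rw [hcopy]
        exact ih p'.1 (h ▸ hlt') p' rfl hp' (by omega)

def prevValues (Q : ℕ × ℕ → V2) (p : ℕ × ℕ) : Set ℝ :=
  insert 0 {y | ∃ p', validIdx p' ∧ lexBefore p' p ∧ y = dot (xstar p) (Q p')}

lemma max_mem_prevValues (Q : ℕ × ℕ → V2) {l j : ℕ} (hl : 2 ≤ l) (hleven : Even l)
    (hj : j < nl l) :
    max (if l = 2 then 0 else dot (xstar (l, j)) (Q (l - 2, nl (l - 2) - 1)))
        (if j = 0 then 0 else dot (xstar (l, j)) (Q (l, j - 1))) ∈ prevValues Q (l, j) := by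
  refine max_rec' (· ∈ prevValues Q (l, j)) ?_ ?_ <;> split_ifs with hcase
  · exact Set.mem_insert _ _
  · have hl4 : 4 ≤ l := by obtain ⟨c, hc⟩ := hleven; omega
    have := two_le_nl (show 2 ≤ l - 2 by omega)
    exact Set.mem_insert_of_mem _
      ⟨(l - 2, nl (l - 2) - 1), ⟨by omega, show nl (l - 2) - 1 < nl (l - 2) by omega⟩,
        Or.inl (by omega), rfl⟩
  · exact Set.mem_insert _ _
  · exact Set.mem_insert_of_mem _
      ⟨(l, j - 1), ⟨hl, show j - 1 < nl l by omega⟩, Or.inr ⟨rfl, by omega⟩, rfl⟩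

lemma isQstar.le_max_of_mem_prevValues {Q : ℕ × ℕ → V2} (hQ : isQstar Q) {l j : ℕ}
    (hl : 2 ≤ l) (hleven : Even l) (hj : j < nl l) :
    ∀ y ∈ prevValues Q (l, j), y ≤
      max (if l = 2 then 0 else dot (xstar (l, j)) (Q (l - 2, nl (l - 2) - 1)))
        (if j = 0 then 0 else dot (xstar (l, j)) (Q (l, j - 1))) := by
  have hx := xstar_nonneg hl hleven hj
  have hprev (h : l ≠ 2) : Q (l - 2, nl (l - 2) - 1) = ![zl (l - 2), 1] :=
    hQ.apply_last (by obtain ⟨c, hc⟩ := hleven; omega) (hleven.tsub even_two)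
  rintro y (rfl | ⟨p', hp', hlt | ⟨hfst, hsnd⟩, rfl⟩)
  · refine le_max_of_le_left ?_
    split_ifs with h
    · exact le_rfl
    · rw [hprev h]
      exact dotProduct_nonneg_of_nonneg hx (vec2_nonneg (zl_nonneg _) zero_le_one)
  · have h : l ≠ 2 := by have := hp'.1; omega
    refine le_max_of_le_left ?_
    rw [if_neg h, hprev h]
    exact dotProduct_le_dotProduct_of_nonneg_left (hQ.le_of_fst_lt hleven p' hp' hlt) hx
  · obtain ⟨l', j'⟩ := p'
    simp only at hfst hsnd
    subst hfst
    refine le_max_of_le_right ?_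
    have hvalid : validIdx (l', j - 1) := ⟨hl, show j - 1 < nl l' by omega⟩
    rw [if_neg (by omega), hQ.1 _ hp' hleven, hQ.1 _ hvalid hleven]
    dsimp only
    exact dotProduct_le_dotProduct_of_nonneg_left
      (vec2_le_vec2 le_rfl (zlj_mono hl (by omega) (by omega))) hx

theorem stmt13 (Q : ℕ × ℕ → V2) (hQ : isQstar Q) (l j : ℕ)
    (hl : 2 ≤ l) (hleven : Even l) (hj : j < nl l) :
    gapStar Q (l, j) =
      dot (xstar (l, j)) (Q (l, j)) -
        max (if l = 2 then 0 else dot (xstar (l, j)) (Q (l - 2, nl (l - 2) - 1)))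
            (if j = 0 then 0 else dot (xstar (l, j)) (Q (l, j - 1))) := by
  have hgreatest : IsGreatest (prevValues Q (l, j)) _ :=
    ⟨max_mem_prevValues Q hl hleven hj, hQ.le_max_of_mem_prevValues hl hleven hj⟩
  rw [gapStar, ← prevValues, hgreatest.csSup_eq]

end Stmt13
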